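/- arXiv:math/9501221 — 3 statements merged into one kernel-verified Lean document; each statement's English description precedes it below -/
import Mathlib

section
/- For every function ω : ℕ → ℝ with ω(n) → ∞ as n → ∞, there exist a sequence p̄ = (p(1), p(2), …) with 0 ≤ p(i) < 1 for all i and a first-order sentence ψ of the language L_+ such that ω(n)·∏_{i=1}^n (1 − p(i)) → ∞ as n → ∞, yet liminf_{n→∞} Prob(n,p̄;ψ) = 0 while limsup_{n→∞} Prob(n,p̄;ψ) = 1. -/
open FirstOrder Filter

namespace RandomGraph

/-- The set of potential edges of a graph on `Fin n` (pairs `(v,w)` with `v < w`).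
Vertex `v : Fin n` represents the number `v + 1` of the interval `[n] = {1, …, n}`. -/
abbrev EdgeIdx (n : ℕ) := {e : Fin n × Fin n // e.1 < e.2}

/-- An outcome of the random graph on `[n]`: a choice of which potential edges are present. -/
abbrev Sample (n : ℕ) := EdgeIdx n → Bool

/-- Adjacency of two vertices (described by their values in `Fin n`) in the outcome `ω`. -/
def adjVal {n : ℕ} (ω : Sample n) (a b : ℕ) : Prop :=
  ∃ e : EdgeIdx n, ω e = true ∧
    ((e.1.1.val = a ∧ e.1.2.val = b) ∨ (e.1.1.val = b ∧ e.1.2.val = a))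

/-- Adjacency of two vertices in the outcome `ω`. -/
def sampleAdj {n : ℕ} (ω : Sample n) (v w : Fin n) : Prop := adjVal ω v.val w.val

/-- The probability of the outcome `ω` in the model `G(n, p̄)`: each pair of distinct
vertices at distance `d` is an edge with probability `p d`, independently.  (The value `p 0` is
never used, since distinct vertices are at distance at least 1.) -/
noncomputable def sampleWeight (p : ℕ → ℝ) {n : ℕ} (ω : Sample n) : ℝ :=
  ∏ e : EdgeIdx n,
    (if ω e then p (e.1.2.val - e.1.1.val) else 1 - p (e.1.2.val - e.1.1.val))

/-- The probability of the outcome `ω` in the circular model `C(n, p̄)`: vertices `v, w` are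
adjacent with probability `p (min |v-w| (n - |v-w|))`, independently. -/
noncomputable def cWeight (p : ℕ → ℝ) {n : ℕ} (ω : Sample n) : ℝ :=
  ∏ e : EdgeIdx n,
    (if ω e then p (min (e.1.2.val - e.1.1.val) (n - (e.1.2.val - e.1.1.val)))
      else 1 - p (min (e.1.2.val - e.1.1.val) (n - (e.1.2.val - e.1.1.val))))

open scoped Classical in
/-- The probability of the event `P` in the random graph `G(n, p̄)`. -/
noncomputable def Pr (p : ℕ → ℝ) (n : ℕ) (P : Sample n → Prop) : ℝ :=
  ∑ ω : Sample n, if P ω then sampleWeight p ω else 0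

open scoped Classical in
/-- The probability of the event `P` in the circular random graph `C(n, p̄)`. -/
noncomputable def cPr (p : ℕ → ℝ) (n : ℕ) (P : Sample n → Prop) : ℝ :=
  ∑ ω : Sample n, if P ω then cWeight p ω else 0

/-! ### The language `L` of graphs (also used as the language `L^c`) -/

/-- An outcome `ω` of the random graph, viewed as a structure of `FirstOrder.Language.graph`,
the language with a single binary adjacency predicate. -/
def graphStructure {n : ℕ} (ω : Sample n) : Language.graph.Structure (Fin n) where
  RelMap | .adj => fun x => sampleAdj ω (x 0) (x 1)

/-- Satisfaction of a sentence of the language `L` in the outcome `ω`. -/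
def SatL {n : ℕ} (ω : Sample n) (ψ : Language.graph.Sentence) : Prop :=
  @Language.Sentence.Realize _ _ (graphStructure ω) ψ

/-- `Prob(n, p̄; ψ)` for a sentence `ψ` of the language `L`. -/
noncomputable def ProbL (p : ℕ → ℝ) (n : ℕ) (ψ : Language.graph.Sentence) : ℝ :=
  Pr p n fun ω => SatL ω ψ

/-- The probability that `C(n, p̄)` satisfies a sentence `ψ` of the language `L^c = L`. -/
noncomputable def cProbL (p : ℕ → ℝ) (n : ℕ) (ψ : Language.graph.Sentence) : ℝ :=
  cPr p n fun ω => SatL ω ψ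

/-! ### The language `L₊` -/

/-- The constants of the language `L₊`: the first element `1` and the last element `n`. -/
inductive plusFunc : ℕ → Type
  | one : plusFunc 0
  | last : plusFunc 0

/-- The relations of `L₊`: adjacency and successor. -/
inductive plusRel : ℕ → Type
  | adj : plusRel 2
  | succ : plusRel 2

/-- The language `L₊` with adjacency, successor (`x = y + 1`), and constants `1` and `n`. -/
def Lplus : Language := ⟨plusFunc, plusRel⟩

/-- An outcome `ω` of the random graph on `[m+1]`, as an `L₊`-structure. -/
def plusStructure {m : ℕ} (ω : Sample (m + 1)) : Lplus.Structure (Fin (m + 1)) where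
  funMap | .one => fun _ => 0 | .last => fun _ => Fin.last m
  RelMap
    | .adj => fun x => sampleAdj ω (x 0) (x 1)
    | .succ => fun x => (x 0).val = (x 1).val + 1

/-- `Prob(n, p̄; ψ)` for a sentence `ψ` of `L₊` (set to `0` in the irrelevant case `n = 0`,
where the constants cannot be interpreted). -/
noncomputable def ProbPlus (p : ℕ → ℝ) : ℕ → Lplus.Sentence → ℝ
  | 0, _ => 0
  | (m + 1), ψ => Pr p (m + 1) fun ω => @Language.Sentence.Realize _ _ (plusStructure ω) ψ

/-! ### The language `L≤` -/

/-- The relations of `L≤`: adjacency and linear order. -/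
inductive leRel : ℕ → Type
  | adj : leRel 2
  | le : leRel 2

/-- The language `L≤` with adjacency and a linear order. -/
def Lle : Language := ⟨fun _ => Empty, leRel⟩

/-- An outcome `ω` of the random graph on `[n]`, as an `L≤`-structure. -/
def leStructure {n : ℕ} (ω : Sample n) : Lle.Structure (Fin n) where
  funMap := fun f _ => Empty.elim f
  RelMap
    | .adj => fun x => sampleAdj ω (x 0) (x 1)
    | .le => fun x => x 0 ≤ x 1

/-- Satisfaction of a sentence of `L≤` in the outcome `ω`. -/
def SatLe {n : ℕ} (ω : Sample n) (ψ : Lle.Sentence) : Prop :=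
  @Language.Sentence.Realize _ _ (leStructure ω) ψ

/-- `Prob(n, p̄; ψ)` for a sentence `ψ` of `L≤`. -/
noncomputable def ProbLe (p : ℕ → ℝ) (n : ℕ) (ψ : Lle.Sentence) : ℝ :=
  Pr p n fun ω => SatLe ω ψ

/-! ### The circular languages `L₊^c` and `L≤^c` -/

/-- The relations of `L₊^c`: adjacency and cyclic successor. -/
inductive plusCRel : ℕ → Type
  | adj : plusCRel 2
  | succ : plusCRel 2

/-- The language `L₊^c`, with adjacency and cyclic successor (`x = y + 1 (mod n)`). -/
def LplusC : Language := ⟨fun _ => Empty, plusCRel⟩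

/-- An outcome `ω` of the circular random graph on `[n]`, as an `L₊^c`-structure. -/
def plusCStructure {n : ℕ} (ω : Sample n) : LplusC.Structure (Fin n) where
  funMap := fun f _ => Empty.elim f
  RelMap
    | .adj => fun x => sampleAdj ω (x 0) (x 1)
    | .succ => fun x => (x 0).val = ((x 1).val + 1) % n

/-- The probability that `C(n, p̄)` satisfies a sentence `ψ` of the language `L₊^c`. -/
noncomputable def cProbPlus (p : ℕ → ℝ) (n : ℕ) (ψ : LplusC.Sentence) : ℝ :=
  cPr p n fun ω => @Language.Sentence.Realize _ _ (plusCStructure ω) ψ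

/-- The relations of `L≤^c`: adjacency and the ternary clockwise-order predicate. -/
inductive cycRel : ℕ → Type
  | adj : cycRel 2
  | btw : cycRel 3

/-- The language `L≤^c`, with adjacency and the ternary clockwise-order predicate `C`. -/
def Lcyc : Language := ⟨fun _ => Empty, cycRel⟩

/-- `C(a, b, c)`: `a ≤ b ≤ c` holds after some cyclic permutation of `(a, b, c)`. -/
def cyclicBtw {n : ℕ} (a b c : Fin n) : Prop :=
  (a ≤ b ∧ b ≤ c) ∨ (b ≤ c ∧ c ≤ a) ∨ (c ≤ a ∧ a ≤ b)

/-- An outcome `ω` of the circular random graph on `[n]`, as an `L≤^c`-structure. -/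
def cycStructure {n : ℕ} (ω : Sample n) : Lcyc.Structure (Fin n) where
  funMap := fun f _ => Empty.elim f
  RelMap
    | .adj => fun x => sampleAdj ω (x 0) (x 1)
    | .btw => fun x => cyclicBtw (x 0) (x 1) (x 2)

/-- Satisfaction of a sentence of `L≤^c` in the outcome `ω`. -/
def SatCyc {n : ℕ} (ω : Sample n) (ψ : Lcyc.Sentence) : Prop :=
  @Language.Sentence.Realize _ _ (cycStructure ω) ψ

/-- The probability that `C(n, p̄)` satisfies a sentence `ψ` of the language `L≤^c`. -/
noncomputable def cProbCyc (p : ℕ → ℝ) (n : ℕ) (ψ : Lcyc.Sentence) : ℝ :=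
  cPr p n fun ω => SatCyc ω ψ

/-! Take very sparse distances `N 0 < N 1 < ⋯` (consecutive ones at least two apart), put
`p (N k) = 1 - 1/(k+1)` and `p = 0` elsewhere, and let `ψ` say that `1` and `n` are adjacent.
Then `Prob(n+1, p̄; ψ) = p n`, which vanishes at `n = N k + 1` and tends to `1` along `n = N k`.
For `N k ≤ n < N (k+1)` the product `∏_{i ≤ n} (1 - p i)` is `1/(k+1)!`, so choosing `N k` beyond
the point where `w ≥ (k+1)! (k+1)` forces `w n ∏_{i ≤ n} (1 - p i) ≥ k + 1`. -/

end RandomGraph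

open Topology

namespace Filter

variable {α β ι : Type*} [ConditionallyCompleteLinearOrder α] [TopologicalSpace α]
  [OrderTopology α] {f : Filter β} {g : Filter ι} [NeBot g] {u : β → α} {v : ι → β} {a : α}

theorem limsup_eq_of_eventually_le_of_tendsto_comp (hu : ∀ᶠ x in f, u x ≤ a)
    (hv : Tendsto v g f) (h : Tendsto (u ∘ v) g (𝓝 a)) : limsup u f = a := by
  have hcobdd : (map v g).IsCoboundedUnder (· ≤ ·) u :=
    (h.isBoundedUnder_ge (f := g)).isCoboundedUnder_le
  refine le_antisymm (limsup_le_of_le (hcobdd.mono (map_mono hv)) hu) ?_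
  calc a = limsup (u ∘ v) g := h.limsup_eq.symm
    _ ≤ limsup u f := hv.limsup_comp_le_limsup hcobdd (isBoundedUnder_of_eventually_le hu)

theorem liminf_eq_of_eventually_ge_of_tendsto_comp (hu : ∀ᶠ x in f, a ≤ u x)
    (hv : Tendsto v g f) (h : Tendsto (u ∘ v) g (𝓝 a)) : liminf u f = a :=
  limsup_eq_of_eventually_le_of_tendsto_comp (α := αᵒᵈ) hu hv h

end Filter

namespace Fintype

variable {α κ R : Type*} [Fintype α] [DecidableEq α] [Fintype κ] [DecidableEq κ] [CommSemiring R]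

theorem sum_ite_apply_eq_prod_of_sum_eq_one (f : α → κ → R) (hf : ∀ a, ∑ b, f a b = 1)
    (a₀ : α) (b₀ : κ) :
    ∑ ω : α → κ, (if ω a₀ = b₀ then ∏ a, f a (ω a) else 0) = f a₀ b₀ := by
  set g : α → κ → R := fun a b => if a = a₀ ∧ b ≠ b₀ then 0 else f a b
  have hg : ∀ ω : α → κ, (if ω a₀ = b₀ then ∏ a, f a (ω a) else 0) = ∏ a, g a (ω a) := by
    intro ω
    split_ifs with h
    · refine Finset.prod_congr rfl fun a _ => (if_neg ?_).symm
      rintro ⟨rfl, hne⟩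
      exact hne h
    · exact (Finset.prod_eq_zero (Finset.mem_univ a₀) (by simp [g, h])).symm
  rw [Finset.sum_congr rfl fun ω _ => hg ω, ← Fintype.prod_sum,
    Finset.prod_eq_single a₀ (fun a _ ha => by simp [g, ha, hf]) (by simp)]
  simp [g]

end Fintype

theorem Filter.Tendsto.exists_sparse_thresholds {α : Type*} [Preorder α] {w : ℕ → α}
    (hw : Tendsto w atTop atTop) (c : ℕ → α) :
    ∃ N : ℕ → ℕ, 0 < N 0 ∧ (∀ k, N k + 1 < N (k + 1)) ∧ ∀ k n, N k ≤ n → c k ≤ w n := by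
  obtain ⟨φ, hφ, hφw⟩ := extraction_forall_of_eventually' (P := fun k m => ∀ n ≥ m, c k ≤ w n)
    fun k => (eventually_atTop.mp (hw.eventually_ge_atTop (c k))).imp
      fun M hM m hm n hn => hM n (hm.trans hn)
  refine ⟨fun k => 2 * φ k + 2, Nat.succ_pos _, fun k => ?_, fun k n hn => hφw k n ?_⟩
  · have := hφ (lt_add_one k)
    dsimp only
    omega
  · dsimp only at hn
    omega

theorem Finset.prod_Icc_one_sub_extend {R : Type*} [CommRing R] {N : ℕ → ℕ} (hN : StrictMono N)
    (hN0 : 0 < N 0) (a : ℕ → R) {k n : ℕ} (hk : N k ≤ n) (hn : n < N (k + 1)) :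
    ∏ i ∈ Icc 1 n, (1 - Function.extend N a 0 i) = ∏ j ∈ range (k + 1), (1 - a j) := by
  have hpre : (Icc 1 n).preimage N hN.injective.injOn = range (k + 1) := by
    ext j
    simp only [mem_preimage, mem_Icc, mem_range]
    constructor
    · exact fun h => hN.lt_iff_lt.mp (h.2.trans_lt hn)
    · intro hj
      exact ⟨hN0.trans_le (hN.monotone (Nat.zero_le j)), (hN.monotone (by omega)).trans hk⟩
  calc ∏ i ∈ Icc 1 n, (1 - Function.extend N a 0 i)
      = ∏ j ∈ (Icc 1 n).preimage N hN.injective.injOn, (1 - Function.extend N a 0 (N j)) :=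
        (prod_preimage N _ _ _ fun i _ hi => by simp [Function.extend_apply' _ _ _ hi]).symm
    _ = ∏ j ∈ range (k + 1), (1 - a j) := by simp only [hpre, hN.injective.extend_apply]

namespace RandomGraph

theorem Pr_edge (p : ℕ → ℝ) {n : ℕ} (e : EdgeIdx n) :
    Pr p n (fun ω => ω e = true) = p (e.1.2.val - e.1.1.val) := by
  have := Fintype.sum_ite_apply_eq_prod_of_sum_eq_one
    (fun (e : EdgeIdx n) (b : Bool) =>
      if b then p (e.1.2.val - e.1.1.val) else 1 - p (e.1.2.val - e.1.1.val))
    (fun _ => by simp) e true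
  unfold Pr sampleWeight
  convert this using 3
  rfl

theorem sampleAdj_iff_of_lt {n : ℕ} (ω : Sample n) {v w : Fin n} (h : v < w) :
    sampleAdj ω v w ↔ ω ⟨(v, w), h⟩ = true := by
  constructor
  · rintro ⟨e, he, ⟨hv, hw⟩ | ⟨hw, hv⟩⟩
    · obtain ⟨⟨v', w'⟩, _⟩ := e
      obtain rfl := Fin.ext hv
      obtain rfl := Fin.ext hw
      exact he
    · exact absurd e.2 (by rw [Fin.lt_def, hw, hv]; omega)
  · exact fun he => ⟨_, he, Or.inl ⟨rfl, rfl⟩⟩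

def adjOneLast : Lplus.Sentence :=
  Language.Relations.formula₂ plusRel.adj
    (Language.Constants.term plusFunc.one) (Language.Constants.term plusFunc.last)

theorem probPlus_adjOneLast (p : ℕ → ℝ) {m : ℕ} (hm : 0 < m) :
    ProbPlus p (m + 1) adjOneLast = p m := by
  have hlt : (0 : Fin (m + 1)) < Fin.last m := by simpa [Fin.lt_def] using hm
  calc ProbPlus p (m + 1) adjOneLast
      = Pr p (m + 1) fun ω => sampleAdj ω 0 (Fin.last m) := rfl
    _ = Pr p (m + 1) fun ω => ω ⟨(0, Fin.last m), hlt⟩ = true :=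
      congrArg _ (funext fun ω => propext (sampleAdj_iff_of_lt ω hlt))
    _ = p m := by simp [Pr_edge]

noncomputable def spikeSeq (N : ℕ → ℕ) : ℕ → ℝ :=
  Function.extend N (fun k => 1 - 1 / ((k : ℝ) + 1)) 0

theorem spikeSeq_apply {N : ℕ → ℕ} (hN : Function.Injective N) (k : ℕ) :
    spikeSeq N (N k) = 1 - 1 / ((k : ℝ) + 1) :=
  hN.extend_apply _ _ k

theorem spikeSeq_mem_Ico {N : ℕ → ℕ} (hN : Function.Injective N) (i : ℕ) :
    0 ≤ spikeSeq N i ∧ spikeSeq N i < 1 := by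
  by_cases hi : ∃ k, N k = i
  · obtain ⟨k, rfl⟩ := hi
    rw [spikeSeq_apply hN, one_sub_div (by positivity), add_sub_cancel_right]
    exact ⟨by positivity, (div_lt_one (by positivity)).mpr (lt_add_one _)⟩
  · simp [spikeSeq, Function.extend_apply' _ _ _ hi]

theorem spikeSeq_add_one {N : ℕ → ℕ} (hN : StrictMono N) {k : ℕ} (hgap : N k + 1 < N (k + 1)) :
    spikeSeq N (N k + 1) = 0 := by
  refine Function.extend_apply' _ _ _ fun ⟨j, hj⟩ => ?_
  have hkj : k < j := hN.lt_iff_lt.mp (by omega)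
  have hjk : j < k + 1 := hN.lt_iff_lt.mp (by omega)
  omega

theorem prod_Icc_one_sub_spikeSeq {N : ℕ → ℕ} (hN : StrictMono N) (hN0 : 0 < N 0) {k n : ℕ}
    (hk : N k ≤ n) (hn : n < N (k + 1)) :
    ∏ i ∈ Finset.Icc 1 n, (1 - spikeSeq N i) = 1 / ((k + 1).factorial : ℝ) := by
  rw [spikeSeq, Finset.prod_Icc_one_sub_extend hN hN0 _ hk hn,
    ← Finset.prod_range_add_one_eq_factorial]
  simp only [sub_sub_cancel, one_div, Finset.prod_inv_distrib]
  push_cast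
  rfl

theorem tendsto_mul_prod_Icc_one_sub_spikeSeq {w : ℕ → ℝ} {N : ℕ → ℕ} (hN : StrictMono N)
    (hN0 : 0 < N 0) (hNw : ∀ k n, N k ≤ n → ((k + 1).factorial * (k + 1) : ℝ) ≤ w n) :
    Tendsto (fun n => w n * ∏ i ∈ Finset.Icc 1 n, (1 - spikeSeq N i)) atTop atTop := by
  refine tendsto_atTop.2 fun C => eventually_atTop.2 ⟨N ⌈C⌉₊, fun n hn => ?_⟩
  obtain ⟨k, hk, hk'⟩ := hN.exists_between_of_tendsto_atTop hN.tendsto_atTop (x := n + 1)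
    (Nat.lt_succ_of_le ((hN.monotone (Nat.zero_le _)).trans hn))
  have hkn : N k ≤ n := Nat.lt_succ_iff.mp hk
  have hCk : ⌈C⌉₊ < k + 1 := hN.lt_iff_lt.mp (by omega)
  rw [prod_Icc_one_sub_spikeSeq hN hN0 hkn hk']
  calc C ≤ k + 1 := (Nat.le_ceil C).trans (by exact_mod_cast hCk.le)
    _ = (k + 1).factorial * (k + 1) * (1 / ((k + 1).factorial : ℝ)) := by field_simp
    _ ≤ w n * (1 / ((k + 1).factorial : ℝ)) := by gcongr; exact hNw k n hkn

/-- For every function `w` tending to infinity there exist a sequence `p̄`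
with `0 ≤ p i < 1` and a sentence `ψ` of `L₊` such that `w n * ∏_{i=1}^n (1 - p i) → ∞`,
yet `liminf Prob(n, p̄; ψ) = 0` while `limsup Prob(n, p̄; ψ) = 1`. -/
theorem statement_5 (w : ℕ → ℝ) (hw : Tendsto w atTop atTop) :
    ∃ (p : ℕ → ℝ) (ψ : Lplus.Sentence),
      (∀ i, 0 ≤ p i ∧ p i < 1) ∧
      Tendsto (fun n : ℕ => w n * ∏ i ∈ Finset.Icc 1 n, (1 - p i)) atTop atTop ∧
      liminf (fun n => ProbPlus p n ψ) atTop = 0 ∧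
      limsup (fun n => ProbPlus p n ψ) atTop = 1 := by
  obtain ⟨N, hN0, hgap, hNw⟩ :=
    hw.exists_sparse_thresholds fun k => ((k + 1).factorial * (k + 1) : ℝ)
  have hN : StrictMono N := strictMono_nat_of_lt_succ fun k => (lt_add_one _).trans (hgap k)
  have hbounds : ∀ᶠ n in atTop, 0 ≤ ProbPlus (spikeSeq N) n adjOneLast ∧
      ProbPlus (spikeSeq N) n adjOneLast ≤ 1 := by
    filter_upwards [eventually_ge_atTop 2] with n hn
    obtain ⟨m, rfl⟩ := Nat.exists_eq_add_of_le' (hn.trans' one_le_two)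
    rw [probPlus_adjOneLast _ (by omega : 0 < m)]
    exact ⟨(spikeSeq_mem_Ico hN.injective m).1, (spikeSeq_mem_Ico hN.injective m).2.le⟩
  refine ⟨spikeSeq N, adjOneLast, spikeSeq_mem_Ico hN.injective,
    tendsto_mul_prod_Icc_one_sub_spikeSeq hN hN0 hNw, ?_, ?_⟩
  · refine liminf_eq_of_eventually_ge_of_tendsto_comp (hbounds.mono fun _ h => h.1)
      ((tendsto_add_atTop_nat 2).comp hN.tendsto_atTop) (tendsto_const_nhds.congr fun k => ?_)
    change (0 : ℝ) = ProbPlus (spikeSeq N) (N k + 1 + 1) adjOneLast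
    rw [probPlus_adjOneLast _ (Nat.succ_pos _), spikeSeq_add_one hN (hgap k)]
  · refine limsup_eq_of_eventually_le_of_tendsto_comp (hbounds.mono fun _ h => h.2)
      ((tendsto_add_atTop_nat 1).comp hN.tendsto_atTop) ?_
    have hpos : ∀ k, 0 < N k := fun k => hN0.trans_le (hN.monotone (Nat.zero_le k))
    simp only [Function.comp_def, probPlus_adjOneLast _ (hpos _), spikeSeq_apply hN.injective]
    simpa using (tendsto_const_nhds (x := (1 : ℝ))).sub tendsto_one_div_add_atTop_nhds_zero_nat

end RandomGraph
end

section
/- For every infinite sequence ā = (a(1), a(2), …) with 0 < a(i) < 1 for all i, there exist a sequence p̄ obtained from ā by inserting some zero terms (i.e., p(j) = a(i) if j = f(i) for a strictly increasing f : ℕ → ℕ, and p(j) = 0 otherwise) and a first-order sentence ψ of the language L^c such that the probability that ψ holds in C(n,p̄) has liminf equal to 0 and limsup equal to 1 as n → ∞. -/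
open FirstOrder Filter

namespace RandomGraph

section ProbAux
set_option linter.unusedSectionVars false

variable {ι : Type*} [Fintype ι] [DecidableEq ι]

noncomputable def Wt (q : ι → ℝ) (ω : ι → Bool) : ℝ :=
  ∏ i, (if ω i then q i else 1 - q i)

open scoped Classical in
noncomputable def PrE (q : ι → ℝ) (P : (ι → Bool) → Prop) : ℝ :=
  ∑ ω : ι → Bool, if P ω then Wt q ω else 0

theorem sum_Wt (q : ι → ℝ) : ∑ ω : ι → Bool, Wt q ω = 1 := by
  classical
  simp only [Wt]
  rw [← Fintype.prod_sum fun i (b : Bool) => if b then q i else 1 - q i, Finset.prod_eq_one]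
  intro i _
  simp

theorem Wt_nonneg {q : ι → ℝ} (hq : ∀ i, 0 ≤ q i ∧ q i ≤ 1) (ω : ι → Bool) : 0 ≤ Wt q ω := by
  refine Finset.prod_nonneg fun i _ => ?_
  rcases hq i with ⟨h1, h2⟩
  split <;> linarith

theorem PrE_nonneg {q : ι → ℝ} (hq : ∀ i, 0 ≤ q i ∧ q i ≤ 1) (P : (ι → Bool) → Prop) :
    0 ≤ PrE q P := by
  classical
  refine Finset.sum_nonneg fun ω _ => ?_
  split
  · exact Wt_nonneg hq ω
  · exact le_refl _

theorem PrE_congr {q : ι → ℝ} {P Q : (ι → Bool) → Prop} (h : ∀ ω, P ω ↔ Q ω) :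
    PrE q P = PrE q Q := by
  classical
  refine Finset.sum_congr rfl fun ω _ => ?_
  by_cases hP : P ω
  · rw [if_pos hP, if_pos ((h ω).1 hP)]
  · rw [if_neg hP, if_neg (fun hQ => hP ((h ω).2 hQ))]

theorem PrE_mono {q : ι → ℝ} (hq : ∀ i, 0 ≤ q i ∧ q i ≤ 1) {P Q : (ι → Bool) → Prop}
    (h : ∀ ω, P ω → Q ω) : PrE q P ≤ PrE q Q := by
  classical
  refine Finset.sum_le_sum fun ω _ => ?_
  by_cases hP : P ω
  · rw [if_pos hP, if_pos (h ω hP)]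
  · rw [if_neg hP]
    split
    · exact Wt_nonneg hq ω
    · exact le_refl _

theorem PrE_add_not (q : ι → ℝ) (P : (ι → Bool) → Prop) :
    PrE q P + PrE q (fun ω => ¬ P ω) = 1 := by
  classical
  simp only [PrE]
  rw [← Finset.sum_add_distrib, ← sum_Wt q]
  refine Finset.sum_congr rfl fun ω _ => ?_
  by_cases h : P ω <;> simp [h]

theorem PrE_le_one {q : ι → ℝ} (hq : ∀ i, 0 ≤ q i ∧ q i ≤ 1) (P : (ι → Bool) → Prop) :
    PrE q P ≤ 1 := by
  classical
  calc PrE q P ≤ ∑ ω : ι → Bool, Wt q ω := by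
        refine Finset.sum_le_sum fun ω _ => ?_
        split
        · exact le_refl _
        · exact Wt_nonneg hq ω
    _ = 1 := sum_Wt q

/-- The event `P` is determined by the coordinates in `S`. -/
def DetOn (P : (ι → Bool) → Prop) (S : Finset ι) : Prop :=
  ∀ ω ω' : ι → Bool, (∀ i ∈ S, ω i = ω' i) → P ω → P ω'

theorem PrE_all {q : ι → ℝ} (E : Finset ι) :
    PrE q (fun ω => ∀ i ∈ E, ω i = true) = ∏ i ∈ E, q i := by
  classical
  have key : ∀ ω : ι → Bool, (if (∀ i ∈ E, ω i = true) then Wt q ω else 0)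
      = ∏ i, (if i ∈ E then (if ω i then q i else 0) else (if ω i then q i else 1 - q i)) := by
    intro ω
    by_cases h : ∀ i ∈ E, ω i = true
    · rw [if_pos h, Wt]
      refine Finset.prod_congr rfl fun i _ => ?_
      by_cases hiE : i ∈ E
      · rw [if_pos hiE, h i hiE]
        simp
      · rw [if_neg hiE]
    · rw [if_neg h]
      push_neg at h
      obtain ⟨i0, hi0, hfalse⟩ := h
      refine (Finset.prod_eq_zero (Finset.mem_univ i0) ?_).symm
      have hf : ω i0 = false := by
        cases hv : ω i0
        · rfl
        · exact absurd hv hfalse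
      simp [hi0, hf]
  have hstep : PrE q (fun ω => ∀ i ∈ E, ω i = true) = ∑ ω : ι → Bool,
      ∏ i, (if i ∈ E then (if ω i then q i else 0) else (if ω i then q i else 1 - q i)) := by
    rw [PrE]
    refine Finset.sum_congr rfl fun ω _ => ?_
    convert key ω using 2
  rw [hstep]
  rw [← Fintype.prod_sum fun i (b : Bool) =>
    (if i ∈ E then (if b then q i else 0) else (if b then q i else 1 - q i))]
  have h3 : ∀ i : ι, (∑ b : Bool,
      (if i ∈ E then (if b then q i else 0) else (if b then q i else 1 - q i)))
      = if i ∈ E then q i else 1 := by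
    intro i
    by_cases hiE : i ∈ E <;> simp [hiE]
  simp only [h3]
  rw [Finset.prod_ite_mem, Finset.univ_inter]

theorem PrE_factor {q : ι → ℝ} (S : Finset ι) {A B : (ι → Bool) → Prop}
    (hA : DetOn A S) (hB : DetOn B Sᶜ) :
    PrE q (fun ω => A ω ∧ B ω) = PrE q A * PrE q B := by
  classical
  set e : (ι → Bool) ≃ ({i // i ∈ S} → Bool) × ({i // i ∉ S} → Bool) :=
    Equiv.piEquivPiSubtypeProd (fun i => i ∈ S) (fun _ => Bool) with he
  set q1 : {i // i ∈ S} → ℝ := fun i => q i.1 with hq1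
  set q2 : {i // i ∉ S} → ℝ := fun i => q i.1 with hq2
  -- agreement facts
  have hmemS : ∀ (σ : {i // i ∈ S} → Bool) (τ : {i // i ∉ S} → Bool) (i : {i // i ∈ S}),
      e.symm (σ, τ) i.1 = σ i := by
    intro σ τ i
    simp [he, Equiv.piEquivPiSubtypeProd_symm_apply, i.2]
  have hmemSc : ∀ (σ : {i // i ∈ S} → Bool) (τ : {i // i ∉ S} → Bool) (i : {i // i ∉ S}),
      e.symm (σ, τ) i.1 = τ i := by
    intro σ τ i
    simp [he, Equiv.piEquivPiSubtypeProd_symm_apply, i.2]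
  have hW : ∀ (σ : {i // i ∈ S} → Bool) (τ : {i // i ∉ S} → Bool),
      Wt q (e.symm (σ, τ)) = Wt q1 σ * Wt q2 τ := by
    intro σ τ
    rw [Wt, ← Fintype.prod_subtype_mul_prod_subtype (fun i => i ∈ S)
      (fun i => if e.symm (σ, τ) i then q i else 1 - q i)]
    congr 1
    · refine Finset.prod_congr (by first | rfl | (congr 1; exact Subsingleton.elim _ _) | congr 1) fun i _ => ?_
      rw [hmemS σ τ i]
    · refine Finset.prod_congr (by first | rfl | (congr 1; exact Subsingleton.elim _ _) | congr 1) fun i _ => ?_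
      rw [hmemSc σ τ i]
  have hAiff : ∀ (σ : {i // i ∈ S} → Bool) (τ τ' : {i // i ∉ S} → Bool),
      A (e.symm (σ, τ)) ↔ A (e.symm (σ, τ')) := by
    intro σ τ τ'
    constructor <;> intro h <;> refine hA _ _ (fun i hi => ?_) h
    · rw [show i = (⟨i, hi⟩ : {i // i ∈ S}).1 from rfl, hmemS, hmemS]
    · rw [show i = (⟨i, hi⟩ : {i // i ∈ S}).1 from rfl, hmemS, hmemS]
  have hBiff : ∀ (σ σ' : {i // i ∈ S} → Bool) (τ : {i // i ∉ S} → Bool),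
      B (e.symm (σ, τ)) ↔ B (e.symm (σ', τ)) := by
    intro σ σ' τ
    constructor <;> intro h <;> refine hB _ _ (fun i hi => ?_) h
    · rw [Finset.mem_compl] at hi
      rw [show i = (⟨i, hi⟩ : {i // i ∉ S}).1 from rfl, hmemSc, hmemSc]
    · rw [Finset.mem_compl] at hi
      rw [show i = (⟨i, hi⟩ : {i // i ∉ S}).1 from rfl, hmemSc, hmemSc]
  set A' : ({i // i ∈ S} → Bool) → Prop := fun σ => A (e.symm (σ, fun _ => false)) with hA'
  set B' : ({i // i ∉ S} → Bool) → Prop := fun τ => B (e.symm (fun _ => false, τ)) with hB'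
  have hsum : ∀ (P : (ι → Bool) → Prop),
      PrE q P = ∑ σ : {i // i ∈ S} → Bool, ∑ τ : {i // i ∉ S} → Bool,
        (if P (e.symm (σ, τ)) then Wt q1 σ * Wt q2 τ else 0) := by
    intro P
    rw [PrE, ← Equiv.sum_comp e.symm (fun ω => if P ω then Wt q ω else 0), Fintype.sum_prod_type]
    refine Finset.sum_congr rfl fun σ _ => Finset.sum_congr rfl fun τ _ => ?_
    rw [hW]
  have keyAB : ∀ σ τ, (if (A (e.symm (σ, τ)) ∧ B (e.symm (σ, τ))) then Wt q1 σ * Wt q2 τ else 0)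
      = (if A' σ then Wt q1 σ else 0) * (if B' τ then Wt q2 τ else 0) := by
    intro σ τ
    have ha : A (e.symm (σ, τ)) ↔ A' σ := hAiff σ τ _
    have hb : B (e.symm (σ, τ)) ↔ B' τ := hBiff σ _ τ
    by_cases h1 : A' σ <;> by_cases h2 : B' τ <;>
      simp [ha, hb, h1, h2]
  have hPrA : PrE q A = (∑ σ : {i // i ∈ S} → Bool, if A' σ then Wt q1 σ else 0) := by
    rw [hsum A]
    calc ∑ σ : {i // i ∈ S} → Bool, ∑ τ : {i // i ∉ S} → Bool,
        (if A (e.symm (σ, τ)) then Wt q1 σ * Wt q2 τ else 0)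
        = ∑ σ : {i // i ∈ S} → Bool, (if A' σ then Wt q1 σ else 0) * ∑ τ, Wt q2 τ := by
          refine Finset.sum_congr rfl fun σ _ => ?_
          rw [Finset.mul_sum]
          refine Finset.sum_congr rfl fun τ _ => ?_
          have ha : A (e.symm (σ, τ)) ↔ A' σ := hAiff σ τ _
          by_cases h1 : A' σ <;> simp [ha, h1]
      _ = _ := by
          refine Finset.sum_congr rfl fun σ _ => ?_
          rw [sum_Wt q2, mul_one]
  have hPrB : PrE q B = (∑ τ : {i // i ∉ S} → Bool, if B' τ then Wt q2 τ else 0) := by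
    rw [hsum B]
    calc ∑ σ : {i // i ∈ S} → Bool, ∑ τ : {i // i ∉ S} → Bool,
        (if B (e.symm (σ, τ)) then Wt q1 σ * Wt q2 τ else 0)
        = ∑ σ : {i // i ∈ S} → Bool, Wt q1 σ * ∑ τ, (if B' τ then Wt q2 τ else 0) := by
          refine Finset.sum_congr rfl fun σ _ => ?_
          rw [Finset.mul_sum]
          refine Finset.sum_congr rfl fun τ _ => ?_
          have hb : B (e.symm (σ, τ)) ↔ B' τ := hBiff σ _ τ
          by_cases h2 : B' τ <;> simp [hb, h2]
      _ = _ := by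
          rw [← Finset.sum_mul, sum_Wt q1, one_mul]
  rw [hsum, hPrA, hPrB, Finset.sum_mul_sum]
  refine Finset.sum_congr rfl fun σ _ => Finset.sum_congr rfl fun τ _ => ?_
  convert keyAB σ τ using 2

theorem PrE_true (q : ι → ℝ) : PrE q (fun _ => True) = 1 := by
  classical
  have : PrE q (fun _ => True) = ∑ ω : ι → Bool, Wt q ω := by
    rw [PrE]
    exact Finset.sum_congr rfl fun ω _ => by simp
  rw [this, sum_Wt]

theorem PrE_pi {V : Type*} [DecidableEq V] (q : ι → ℝ) (t : Finset V) (E : V → Finset ι)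
    (G : V → (ι → Bool) → Prop)
    (hdisj : ∀ v ∈ t, ∀ w ∈ t, v ≠ w → Disjoint (E v) (E w))
    (hdet : ∀ v ∈ t, DetOn (G v) (E v)) :
    PrE q (fun ω => ∀ v ∈ t, G v ω) = ∏ v ∈ t, PrE q (G v) := by
  classical
  revert hdisj hdet
  induction t using Finset.induction_on with
  | empty =>
    intro _ _
    rw [Finset.prod_empty, PrE_congr (Q := fun _ => True) (fun ω => by simp)]
    exact PrE_true q
  | @insert a s ha ih =>
    intro hdisj hdet
    have hB : DetOn (fun ω => ∀ v ∈ s, G v ω) (E a)ᶜ := by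
      intro ω ω' hagree h v hv
      refine hdet v (Finset.mem_insert_of_mem hv) ω ω' (fun i hi => ?_) (h v hv)
      refine hagree i (Finset.mem_compl.2 fun hiEa => ?_)
      exact (Finset.disjoint_left.1 (hdisj v (Finset.mem_insert_of_mem hv) a
        (Finset.mem_insert_self a s) (fun h' => ha (h' ▸ hv))) hi) hiEa
    have hstep : PrE q (fun ω => ∀ v ∈ insert a s, G v ω)
        = PrE q (G a) * PrE q (fun ω => ∀ v ∈ s, G v ω) := by
      rw [← PrE_factor (E a) (hdet a (Finset.mem_insert_self a s)) hB]
      exact PrE_congr fun ω => by simp [Finset.forall_mem_insert]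
    rw [hstep, Finset.prod_insert ha,
      ih (fun v hv w hw hne => hdisj v (Finset.mem_insert_of_mem hv) w
        (Finset.mem_insert_of_mem hw) hne) (fun v hv => hdet v (Finset.mem_insert_of_mem hv))]

theorem PrE_not_all (q : ι → ℝ) (E : Finset ι) :
    PrE q (fun ω => ¬ (∀ i ∈ E, ω i = true)) = 1 - ∏ i ∈ E, q i := by
  have h := PrE_add_not q (fun ω => ∀ i ∈ E, ω i = true)
  rw [PrE_all] at h
  linarith

theorem PrE_forall_not_all {V : Type*} [DecidableEq V] (q : ι → ℝ) (t : Finset V)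
    (E : V → Finset ι)
    (hdisj : ∀ v ∈ t, ∀ w ∈ t, v ≠ w → Disjoint (E v) (E w)) :
    PrE q (fun ω => ∀ v ∈ t, ¬ (∀ i ∈ E v, ω i = true))
      = ∏ v ∈ t, (1 - ∏ i ∈ E v, q i) := by
  rw [PrE_pi q t E (fun v ω => ¬ (∀ i ∈ E v, ω i = true)) hdisj ?_]
  · exact Finset.prod_congr rfl fun v _ => PrE_not_all q (E v)
  · intro v _ ω ω' hagree h hcontra
    exact h fun i hi => (hagree i hi).trans (hcontra i hi)

theorem PrE_exists_all {V : Type*} [DecidableEq V] (q : ι → ℝ) (t : Finset V)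
    (E : V → Finset ι)
    (hdisj : ∀ v ∈ t, ∀ w ∈ t, v ≠ w → Disjoint (E v) (E w)) :
    PrE q (fun ω => ∃ v ∈ t, ∀ i ∈ E v, ω i = true)
      = 1 - ∏ v ∈ t, (1 - ∏ i ∈ E v, q i) := by
  have h := PrE_add_not q (fun ω => ∃ v ∈ t, ∀ i ∈ E v, ω i = true)
  have h2 : PrE q (fun ω => ¬ ∃ v ∈ t, ∀ i ∈ E v, ω i = true)
      = PrE q (fun ω => ∀ v ∈ t, ¬ (∀ i ∈ E v, ω i = true)) :=
    PrE_congr fun ω => by push_neg; rfl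
  rw [h2, PrE_forall_not_all q t E hdisj] at h
  linarith

end ProbAux


section SeqAux

/-- `D n a b` is the circular distance between `a` and `b` on a cycle of length `n`. -/
def Dc (n a b : ℕ) : ℕ := min (max a b - min a b) (n - (max a b - min a b))

theorem Dc_comm (n a b : ℕ) : Dc n a b = Dc n b a := by
  unfold Dc; omega

/-- The threshold sizes. -/
noncomputable def Nk (a : ℕ → ℝ) (k : ℕ) : ℕ := ⌈(k : ℝ) / (a k ^ 3)⌉₊

/-- The positions sequence. -/
noncomputable def fseq (a : ℕ → ℝ) : ℕ → ℕ
  | 0 => Nk a 0 + 1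
  | (k + 1) => max (3 * fseq a k + 2) (Nk a (k + 1) + 1)

theorem fseq_ge (a : ℕ → ℝ) (k : ℕ) : Nk a k + 1 ≤ fseq a k := by
  cases k with
  | zero => exact le_refl _
  | succ m => exact le_max_right _ _

theorem fseq_pos (a : ℕ → ℝ) (k : ℕ) : 1 ≤ fseq a k :=
  le_trans (by omega) (fseq_ge a k)

theorem fseq_grow (a : ℕ → ℝ) (k : ℕ) : 3 * fseq a k + 2 ≤ fseq a (k + 1) :=
  le_max_left _ _

theorem fseq_strictMono (a : ℕ → ℝ) : StrictMono (fseq a) := by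
  apply strictMono_nat_of_lt_succ
  intro k
  have := fseq_grow a k
  have := fseq_pos a k
  omega

theorem fseq_mono (a : ℕ → ℝ) : Monotone (fseq a) := (fseq_strictMono a).monotone

/-- no two terms sum to a third -/
theorem fseq_sum_free (a : ℕ → ℝ) (i j l : ℕ) : fseq a i + fseq a j ≠ fseq a l := by
  intro h
  set m := max i j with hm
  have h1 : fseq a i ≤ fseq a m := fseq_mono a (le_max_left i j)
  have h2 : fseq a j ≤ fseq a m := fseq_mono a (le_max_right i j)
  have h3 : 1 ≤ fseq a i := fseq_pos a i
  have h4 : 1 ≤ fseq a j := fseq_pos a j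
  have hchoice : fseq a m = fseq a i ∨ fseq a m = fseq a j := by
    rcases max_choice i j with h' | h'
    · exact Or.inl (by rw [hm, h'])
    · exact Or.inr (by rw [hm, h'])
  rcases le_or_gt l m with hl | hl
  · have : fseq a l ≤ fseq a m := fseq_mono a hl
    omega
  · have : fseq a (m + 1) ≤ fseq a l := fseq_mono a hl
    have := fseq_grow a m
    omega

/-- no three terms sum to `3 * fseq a K + 1` -/
theorem fseq_three_sum (a : ℕ → ℝ) (K i j l : ℕ) :
    fseq a i + fseq a j + fseq a l ≠ 3 * fseq a K + 1 := by
  intro h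
  set m := max i (max j l) with hm
  have h1 : fseq a i ≤ fseq a m := fseq_mono a (le_max_left _ _)
  have h2 : fseq a j ≤ fseq a m := fseq_mono a (le_trans (le_max_left _ _) (le_max_right _ _))
  have h3 : fseq a l ≤ fseq a m := fseq_mono a (le_trans (le_max_right _ _) (le_max_right _ _))
  have h4 : 1 ≤ fseq a i := fseq_pos a i
  have h5 : 1 ≤ fseq a j := fseq_pos a j
  have h6 : 1 ≤ fseq a l := fseq_pos a l
  have hchoice : fseq a m = fseq a i ∨ fseq a m = fseq a j ∨ fseq a m = fseq a l := by
    rcases max_choice i (max j l) with h' | h'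
    · exact Or.inl (by rw [hm, h'])
    · rcases max_choice j l with h'' | h''
      · exact Or.inr (Or.inl (by rw [hm, h', h'']))
      · exact Or.inr (Or.inr (by rw [hm, h', h'']))
  rcases le_or_gt m K with hl | hl
  · have : fseq a m ≤ fseq a K := fseq_mono a hl
    omega
  · have : fseq a (K + 1) ≤ fseq a m := fseq_mono a hl
    have := fseq_grow a K
    omega

/-- The key number-theoretic lemma, sorted version. -/
theorem key_sorted (a : ℕ → ℝ) (K : ℕ) (x y z : ℕ) (hxy : x < y) (hyz : y < z)
    (hz : z < 3 * fseq a K + 1) (i1 i2 i3 : ℕ)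
    (h1 : fseq a i1 = Dc (3 * fseq a K + 1) x y)
    (h2 : fseq a i2 = Dc (3 * fseq a K + 1) y z)
    (h3 : fseq a i3 = Dc (3 * fseq a K + 1) x z) : False := by
  have hd : fseq a i1 + fseq a i2 + fseq a i3 = 3 * fseq a K + 1
      ∨ fseq a i1 = fseq a i2 + fseq a i3
      ∨ fseq a i2 = fseq a i1 + fseq a i3
      ∨ fseq a i3 = fseq a i1 + fseq a i2 := by
    unfold Dc at h1 h2 h3
    omega
  rcases hd with h | h | h | h
  · exact fseq_three_sum a K i1 i2 i3 h
  · exact fseq_sum_free a i2 i3 i1 h.symm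
  · exact fseq_sum_free a i1 i3 i2 h.symm
  · exact fseq_sum_free a i1 i2 i3 h.symm

/-- The key number-theoretic lemma, unsorted version. -/
theorem key_nt (a : ℕ → ℝ) (K : ℕ) (x y z : ℕ)
    (hx : x < 3 * fseq a K + 1) (hy : y < 3 * fseq a K + 1) (hz : z < 3 * fseq a K + 1)
    (i1 i2 i3 : ℕ)
    (h1 : fseq a i1 = Dc (3 * fseq a K + 1) x y)
    (h2 : fseq a i2 = Dc (3 * fseq a K + 1) y z)
    (h3 : fseq a i3 = Dc (3 * fseq a K + 1) x z) : False := by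
  -- if any two coincide, the corresponding `Dc` is `0`, contradicting `fseq ≥ 1`
  have hne : x ≠ y ∧ y ≠ z ∧ x ≠ z := by
    refine ⟨?_, ?_, ?_⟩ <;> intro hEq
    · have := fseq_pos a i1
      subst hEq; unfold Dc at h1; omega
    · have := fseq_pos a i2
      subst hEq; unfold Dc at h2; omega
    · have := fseq_pos a i3
      subst hEq; unfold Dc at h3; omega
  obtain ⟨hxy, hyz, hxz⟩ := hne
  rcases lt_trichotomy x y with h | h | h
  · rcases lt_trichotomy y z with h' | h' | h'
    · exact key_sorted a K x y z h h' hz i1 i2 i3 h1 h2 h3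
    · exact absurd h' hyz
    · rcases lt_trichotomy x z with h'' | h'' | h''
      · exact key_sorted a K x z y h'' h' hy i3 i2 i1 h3 (by rw [h2, Dc_comm]) h1
      · exact absurd h'' hxz
      · exact key_sorted a K z x y h'' h hy i3 i1 i2 (by rw [h3, Dc_comm]) h1 (by rw [h2, Dc_comm])
  · exact absurd h hxy
  · rcases lt_trichotomy x z with h' | h' | h'
    · exact key_sorted a K y x z h h' hz i1 i3 i2 (by rw [h1, Dc_comm]) h3 h2
    · exact absurd h' hxz
    · rcases lt_trichotomy y z with h'' | h'' | h''
      · exact key_sorted a K y z x h'' h' hx i2 i3 i1 h2 (by rw [h3, Dc_comm]) (by rw [h1, Dc_comm])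
      · exact absurd h'' hyz
      · exact key_sorted a K z y x h'' h hx i2 i1 i3 (by rw [h2, Dc_comm]) (by rw [h1, Dc_comm]) (by rw [h3, Dc_comm])

end SeqAux


open scoped Classical in
noncomputable def pseq (a : ℕ → ℝ) (j : ℕ) : ℝ :=
  if h : ∃ i, fseq a i = j then a h.choose else 0

section SeqAux2x
theorem pseq_fseq (a : ℕ → ℝ) (i : ℕ) : pseq a (fseq a i) = a i := by
  have h : ∃ i', fseq a i' = fseq a i := ⟨i, rfl⟩
  rw [pseq, dif_pos h]
  congr 1
  exact (fseq_strictMono a).injective h.choose_spec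

theorem pseq_zero (a : ℕ → ℝ) (j : ℕ) (h : ∀ i, fseq a i ≠ j) : pseq a j = 0 := by
  rw [pseq, dif_neg (fun ⟨i, hi⟩ => h i hi)]

theorem pseq_support (a : ℕ → ℝ) (j : ℕ) (h : pseq a j ≠ 0) : ∃ i, fseq a i = j := by
  by_contra hc
  push_neg at hc
  exact h (pseq_zero a j hc)

theorem pseq_bounds {a : ℕ → ℝ} (ha : ∀ i, 0 < a i ∧ a i < 1) (j : ℕ) :
    0 ≤ pseq a j ∧ pseq a j ≤ 1 := by
  rw [pseq]
  split
  · exact ⟨(ha _).1.le, (ha _).2.le⟩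
  · norm_num

theorem pow_bound {x : ℝ} (hx0 : 0 < x) (hx1 : x ≤ 1) (k m : ℕ) (hm : (k : ℝ) ≤ m * x) :
    (1 - x) ^ m ≤ 1 / (k + 1) := by
  have h1 : (1 : ℝ) + m * x ≤ (1 + x) ^ m := by
    have := one_add_mul_le_pow (a := x) (by linarith) m
    linarith [this]
  have h2 : (0:ℝ) ≤ 1 - x := by linarith
  have h3 : ((1 - x) * (1 + x)) ^ m ≤ 1 := by
    apply pow_le_one₀ (by nlinarith) (by nlinarith)
  have h4 : (1 - x) ^ m * (1 + m * x) ≤ 1 := by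
    calc (1-x)^m * (1 + m*x) ≤ (1-x)^m * (1+x)^m :=
          mul_le_mul_of_nonneg_left h1 (pow_nonneg h2 m)
      _ = ((1-x)*(1+x))^m := (mul_pow _ _ m).symm
      _ ≤ 1 := h3
  have h5 : (0:ℝ) < 1 + m * x := by
    have := mul_nonneg (Nat.cast_nonneg m) hx0.le
    linarith
  have h6 : (1-x)^m ≤ 1/(1 + m*x) := by
    rw [le_div_iff₀ h5]
    linarith [h4]
  refine h6.trans ?_
  apply one_div_le_one_div_of_le (by positivity)
  linarith

theorem final_limits (u : ℕ → ℝ) (h01 : ∀ n, 0 ≤ u n ∧ u n ≤ 1) (g : ℕ → ℕ)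
    (hg : Tendsto g atTop atTop) (hg0 : ∀ k, u (g k) = 0)
    (g' : ℕ → ℕ) (hg' : Tendsto g' atTop atTop)
    (hg1 : ∀ k : ℕ, 1 - 1/(k+1 : ℝ) ≤ u (g' k)) :
    liminf u atTop = 0 ∧ limsup u atTop = 1 := by
  have hb_above : IsBoundedUnder (· ≤ ·) atTop u := isBoundedUnder_of ⟨1, fun n => (h01 n).2⟩
  have hb_below : IsBoundedUnder (· ≥ ·) atTop u := isBoundedUnder_of ⟨0, fun n => (h01 n).1⟩
  constructor
  · refine le_antisymm ?_ ?_
    · exact liminf_le_of_frequently_le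
        (hg.frequently (Frequently.of_forall fun k => (hg0 k).le)) hb_below
    · exact le_liminf_of_le hb_above.isCoboundedUnder_flip
        (Eventually.of_forall fun n => (h01 n).1)
  · refine le_antisymm ?_ ?_
    · exact limsup_le_of_le hb_below.isCoboundedUnder_flip
        (Eventually.of_forall fun n => (h01 n).2)
    · by_contra hlt
      push_neg at hlt
      obtain ⟨k, hk⟩ := exists_nat_one_div_lt (by linarith : (0:ℝ) < 1 - limsup u atTop)
      have hfreq : ∃ᶠ n in atTop, 1 - 1/(k+1 : ℝ) ≤ u n := by
        refine hg'.frequently ?_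
        refine (Filter.eventually_atTop.2 ⟨k, fun k' hk' => ?_⟩).frequently
        refine le_trans ?_ (hg1 k')
        have h1 : (1:ℝ)/(k'+1) ≤ 1/(k+1) := by
          apply one_div_le_one_div_of_le (by positivity)
          push_cast
          have : (k:ℝ) ≤ (k':ℝ) := Nat.cast_le.2 hk'
          linarith
        linarith
      have := le_limsup_of_frequently_le hfreq hb_above
      linarith
end SeqAux2x

section GraphGlue

variable {a : ℕ → ℝ}

noncomputable def qfun (p : ℕ → ℝ) (n : ℕ) : EdgeIdx n → ℝ :=
  fun e => p (min (e.1.2.val - e.1.1.val) (n - (e.1.2.val - e.1.1.val)))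

theorem cWeight_eq_Wt (p : ℕ → ℝ) {n : ℕ} (ω : Sample n) : cWeight p ω = Wt (qfun p n) ω := rfl

theorem cPr_eq_PrE (p : ℕ → ℝ) (n : ℕ) (P : Sample n → Prop) :
    cPr p n P = PrE (qfun p n) P := rfl

/-- The sentence: there is a triangle. -/
noncomputable def psi : Language.graph.Sentence :=
  ∃' ∃' ∃' ((Language.adj.boundedFormula₂ (&0) (&1)) ⊓
    ((Language.adj.boundedFormula₂ (&1) (&2)) ⊓ (Language.adj.boundedFormula₂ (&0) (&2))))

theorem relMap_adj {n : ℕ} (ω : Sample n) (x y : Fin n) :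
    @Language.Structure.RelMap Language.graph (Fin n) (graphStructure ω) 2 Language.adj ![x, y]
      = sampleAdj ω x y := rfl

theorem SatL_psi_iff {n : ℕ} (ω : Sample n) :
    SatL ω psi ↔ ∃ x y z : Fin n, sampleAdj ω x y ∧ sampleAdj ω y z ∧ sampleAdj ω x z := by
  letI := graphStructure ω
  show psi.Realize (Fin n) ↔ _
  simp only [psi, Language.Sentence.Realize, Language.Formula.Realize,
    Language.BoundedFormula.realize_ex, Language.BoundedFormula.realize_inf,
    Language.BoundedFormula.realize_rel₂, Language.Term.realize_var]
  constructor
  · rintro ⟨x, y, z, h1, h2, h3⟩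
    exact ⟨x, y, z, by simpa [Fin.snoc, relMap_adj] using h1,
      by simpa [Fin.snoc, relMap_adj] using h2, by simpa [Fin.snoc, relMap_adj] using h3⟩
  · rintro ⟨x, y, z, h1, h2, h3⟩
    exact ⟨x, y, z, by simpa [Fin.snoc, relMap_adj] using h1,
      by simpa [Fin.snoc, relMap_adj] using h2, by simpa [Fin.snoc, relMap_adj] using h3⟩

theorem edge_lt {n : ℕ} (e : EdgeIdx n) : e.1.1.val < e.1.2.val := e.2

theorem cWeight_eq_zero {p : ℕ → ℝ} {n : ℕ} {ω : Sample n} (e : EdgeIdx n)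
    (he : ω e = true) (hp : qfun p n e = 0) : cWeight p ω = 0 := by
  rw [cWeight_eq_Wt, Wt]
  refine Finset.prod_eq_zero (Finset.mem_univ e) ?_
  simp [he, hp]

theorem cPr_eq_zero {p : ℕ → ℝ} {n : ℕ} {P : Sample n → Prop}
    (h : ∀ ω, P ω → cWeight p ω = 0) : cPr p n P = 0 := by
  classical
  rw [cPr_eq_PrE, PrE]
  refine Finset.sum_eq_zero fun ω _ => ?_
  split
  · rw [← cWeight_eq_Wt]
    exact h ω ‹_›
  · rfl

theorem prob_zero (a : ℕ → ℝ) (K : ℕ) :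
    cProbL (pseq a) (3 * fseq a K + 1) psi = 0 := by
  rw [cProbL]
  apply cPr_eq_zero
  intro ω hSat
  rw [SatL_psi_iff] at hSat
  obtain ⟨x, y, z, hxy, hyz, hxz⟩ := hSat
  obtain ⟨e1, he1, hc1⟩ := hxy
  obtain ⟨e2, he2, hc2⟩ := hyz
  obtain ⟨e3, he3, hc3⟩ := hxz
  by_cases h1 : qfun (pseq a) (3 * fseq a K + 1) e1 = 0
  · exact cWeight_eq_zero e1 he1 h1
  by_cases h2 : qfun (pseq a) (3 * fseq a K + 1) e2 = 0
  · exact cWeight_eq_zero e2 he2 h2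
  by_cases h3 : qfun (pseq a) (3 * fseq a K + 1) e3 = 0
  · exact cWeight_eq_zero e3 he3 h3
  exfalso
  simp only [qfun] at h1 h2 h3
  obtain ⟨i1, hi1⟩ := pseq_support a _ h1
  obtain ⟨i2, hi2⟩ := pseq_support a _ h2
  obtain ⟨i3, hi3⟩ := pseq_support a _ h3
  have hl1 := edge_lt e1
  have hl2 := edge_lt e2
  have hl3 := edge_lt e3
  have hd1 : fseq a i1 = Dc (3 * fseq a K + 1) x.val y.val := by
    rcases hc1 with ⟨hA, hB⟩ | ⟨hA, hB⟩ <;> (rw [hi1]; unfold Dc; omega)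
  have hd2 : fseq a i2 = Dc (3 * fseq a K + 1) y.val z.val := by
    rcases hc2 with ⟨hA, hB⟩ | ⟨hA, hB⟩ <;> (rw [hi2]; unfold Dc; omega)
  have hd3 : fseq a i3 = Dc (3 * fseq a K + 1) x.val z.val := by
    rcases hc3 with ⟨hA, hB⟩ | ⟨hA, hB⟩ <;> (rw [hi3]; unfold Dc; omega)
  exact key_nt a K x.val y.val z.val x.isLt y.isLt z.isLt i1 i2 i3 hd1 hd2 hd3

/-! the triangles in `C(3d)` -/

def mkE {n : ℕ} (u v : ℕ) (h1 : u < v) (h2 : v < n) : EdgeIdx n :=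
  ⟨(⟨u, h1.trans h2⟩, ⟨v, h2⟩), Fin.mk_lt_mk.mpr h1⟩

theorem mkE_inj {n : ℕ} {u v u' v' : ℕ} (h1 : u < v) (h2 : v < n) (h1' : u' < v')
    (h2' : v' < n) : mkE u v h1 h2 = mkE u' v' h1' h2' ↔ u = u' ∧ v = v' := by
  simp [mkE, Subtype.ext_iff, Prod.ext_iff, Fin.mk.injEq]

def eA (d : ℕ) (v : Fin d) : EdgeIdx (3 * d) :=
  mkE v.val (v.val + d) (by have := v.isLt; omega) (by have := v.isLt; omega)

def eB (d : ℕ) (v : Fin d) : EdgeIdx (3 * d) :=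
  mkE (v.val + d) (v.val + 2 * d) (by have := v.isLt; omega) (by have := v.isLt; omega)

def eC (d : ℕ) (v : Fin d) : EdgeIdx (3 * d) :=
  mkE v.val (v.val + 2 * d) (by have := v.isLt; omega) (by have := v.isLt; omega)

def triE (d : ℕ) (v : Fin d) : Finset (EdgeIdx (3 * d)) := {eA d v, eB d v, eC d v}

theorem triE_disjoint (d : ℕ) (v w : Fin d) (hvw : v ≠ w) : Disjoint (triE d v) (triE d w) := by
  rw [Finset.disjoint_left]
  intro e hev hew
  have hv := v.isLt
  have hw := w.isLt
  have hne : v.val ≠ w.val := fun h => hvw (Fin.ext h)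
  simp only [triE, Finset.mem_insert, Finset.mem_singleton] at hev hew
  rcases hev with h | h | h <;> rcases hew with h' | h' | h' <;>
    (rw [h] at h'; simp only [eA, eB, eC, mkE_inj] at h'; omega)

theorem q_eA (p : ℕ → ℝ) (d : ℕ) (v : Fin d) : qfun p (3 * d) (eA d v) = p d := by
  show p (min (v.val + d - v.val) (3 * d - (v.val + d - v.val))) = p d
  congr 1
  omega

theorem q_eB (p : ℕ → ℝ) (d : ℕ) (v : Fin d) : qfun p (3 * d) (eB d v) = p d := by
  show p (min (v.val + 2 * d - (v.val + d)) (3 * d - (v.val + 2 * d - (v.val + d)))) = p d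
  congr 1
  omega

theorem q_eC (p : ℕ → ℝ) (d : ℕ) (v : Fin d) : qfun p (3 * d) (eC d v) = p d := by
  show p (min (v.val + 2 * d - v.val) (3 * d - (v.val + 2 * d - v.val))) = p d
  congr 1
  omega

theorem triE_prod (p : ℕ → ℝ) (d : ℕ) (v : Fin d) :
    ∏ e ∈ triE d v, qfun p (3 * d) e = p d ^ 3 := by
  have hv := v.isLt
  have hAB : eA d v ≠ eB d v := by
    simp only [ne_eq, eA, eB, mkE_inj]
    omega
  have hAC : eA d v ≠ eC d v := by
    simp only [ne_eq, eA, eC, mkE_inj]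
    omega
  have hBC : eB d v ≠ eC d v := by
    simp only [ne_eq, eB, eC, mkE_inj]
    omega
  rw [triE, Finset.prod_insert (by simp [hAB, hAC]), Finset.prod_insert (by simp [hBC]),
    Finset.prod_singleton, q_eA, q_eB, q_eC]
  ring

theorem prob_one_gen (p : ℕ → ℝ) (hp : ∀ j, 0 ≤ p j ∧ p j ≤ 1) (d : ℕ) (hd : 1 ≤ d) :
    1 - (1 - p d ^ 3) ^ d ≤ cProbL p (3 * d) psi := by
  classical
  have hq : ∀ e : EdgeIdx (3 * d), 0 ≤ qfun p (3 * d) e ∧ qfun p (3 * d) e ≤ 1 :=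
    fun e => hp _
  rw [cProbL, cPr_eq_PrE]
  have hstep : PrE (qfun p (3 * d))
      (fun ω => ∃ v ∈ (Finset.univ : Finset (Fin d)), ∀ e ∈ triE d v, ω e = true)
      ≤ PrE (qfun p (3 * d)) (fun ω => SatL ω psi) := by
    apply PrE_mono hq
    rintro ω ⟨v, -, hall⟩
    have hv := v.isLt
    rw [SatL_psi_iff]
    refine ⟨⟨v.val, by omega⟩, ⟨v.val + d, by omega⟩, ⟨v.val + 2 * d, by omega⟩,
      ⟨eA d v, hall _ (by simp [triE]), Or.inl ⟨rfl, rfl⟩⟩,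
      ⟨eB d v, hall _ (by simp [triE]), Or.inl ⟨rfl, rfl⟩⟩,
      ⟨eC d v, hall _ (by simp [triE]), Or.inl ⟨rfl, rfl⟩⟩⟩
  refine le_trans ?_ hstep
  rw [PrE_exists_all (qfun p (3 * d)) Finset.univ (triE d)
    (fun v _ w _ hvw => triE_disjoint d v w hvw)]
  have hconst : ∏ v ∈ (Finset.univ : Finset (Fin d)),
      (1 - ∏ e ∈ triE d v, qfun p (3 * d) e) = (1 - p d ^ 3) ^ d := by
    rw [Finset.prod_congr rfl (fun v _ => by rw [triE_prod p d v]),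
      Finset.prod_const, Finset.card_univ, Fintype.card_fin]
  rw [hconst]

theorem prob_one (ha : ∀ i, 0 < a i ∧ a i < 1) (k : ℕ) :
    1 - 1 / (k + 1 : ℝ) ≤ cProbL (pseq a) (3 * fseq a k) psi := by
  have h1 := prob_one_gen (pseq a) (pseq_bounds ha) (fseq a k) (fseq_pos a k)
  rw [pseq_fseq] at h1
  refine le_trans ?_ h1
  have hx0 : 0 < a k ^ 3 := pow_pos (ha k).1 3
  have hx1 : a k ^ 3 ≤ 1 := pow_le_one₀ (ha k).1.le (ha k).2.le
  have hm : (k : ℝ) ≤ (fseq a k : ℕ) * (a k ^ 3) := by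
    have hNk : (k : ℝ) / (a k ^ 3) ≤ (Nk a k : ℝ) := Nat.le_ceil _
    have hfN : (Nk a k : ℝ) ≤ ((fseq a k : ℕ) : ℝ) := by
      have h := fseq_ge a k
      exact Nat.cast_le.2 (by omega)
    rw [div_le_iff₀ hx0] at hNk
    calc (k : ℝ) ≤ (Nk a k : ℝ) * (a k ^ 3) := hNk
      _ ≤ (fseq a k : ℕ) * (a k ^ 3) := mul_le_mul_of_nonneg_right hfN hx0.le
  have := pow_bound hx0 hx1 k (fseq a k) hm
  linarith

theorem cProbL_bounds (p : ℕ → ℝ) (hp : ∀ j, 0 ≤ p j ∧ p j ≤ 1) (n : ℕ) :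
    0 ≤ cProbL p n psi ∧ cProbL p n psi ≤ 1 := by
  rw [cProbL, cPr_eq_PrE]
  exact ⟨PrE_nonneg (fun e => hp _) _, PrE_le_one (fun e => hp _) _⟩

end GraphGlue

/-- For every sequence `ā` with `0 < a i < 1` there are a sequence `p̄`
obtained from `ā` by inserting zero terms (the `i`-th term of `ā` being placed at position
`f i` for a strictly increasing `f`) and a sentence `ψ` of the language `L^c` (the language
of graphs) such that the probability that `C(n, p̄)` satisfies `ψ` has liminf `0` and
limsup `1`. -/
theorem statement_13 (a : ℕ → ℝ) (ha : ∀ i, 0 < a i ∧ a i < 1) :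
    ∃ (f : ℕ → ℕ) (p : ℕ → ℝ) (ψ : Language.graph.Sentence),
      StrictMono f ∧ 1 ≤ f 0 ∧
      (∀ i, p (f i) = a i) ∧
      (∀ j, (∀ i, f i ≠ j) → p j = 0) ∧
      liminf (fun n => cProbL p n ψ) atTop = 0 ∧
      limsup (fun n => cProbL p n ψ) atTop = 1 := by
  classical
  refine ⟨fseq a, pseq a, psi, fseq_strictMono a, fseq_pos a 0, fun i => pseq_fseq a i,
    fun j hj => pseq_zero a j hj, ?_, ?_⟩
  all_goals {
    have htend1 : Tendsto (fun k => 3 * fseq a k + 1) atTop atTop := by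
      apply tendsto_atTop_mono (fun k => ?_) tendsto_id
      have := (fseq_strictMono a).le_apply (x := k)
      simp only [id]
      omega
    have htend2 : Tendsto (fun k => 3 * fseq a k) atTop atTop := by
      apply tendsto_atTop_mono (fun k => ?_) tendsto_id
      have := (fseq_strictMono a).le_apply (x := k)
      simp only [id]
      omega
    have hlim := final_limits (fun n => cProbL (pseq a) n psi)
      (fun n => cProbL_bounds _ (pseq_bounds ha) n)
      (fun k => 3 * fseq a k + 1) htend1 (fun k => prob_zero a k)
      (fun k => 3 * fseq a k) htend2 (fun k => prob_one ha k)
    first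
    | exact hlim.1
    | exact hlim.2 }

end RandomGraph
end

section
/- Let 𝒢 be a family of finite graphs closed under disjoint union ⊕, and let k be a natural number. Then there exists a graph G ∈ 𝒢 such that for every H ∈ 𝒢, the graphs G and G ⊕ H satisfy exactly the same first-order sentences of the language L of quantifier depth at most k, i.e., Th_k(G) = Th_k(G ⊕ H). -/
open FirstOrder Filter

namespace RandomGraph

/-- The quantifier depth of a first-order formula. -/
def qDepth {L : Language} {α : Type} : ∀ {n : ℕ}, L.BoundedFormula α n → ℕ
  | _, .falsum => 0
  | _, .equal _ _ => 0
  | _, .rel _ _ => 0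
  | _, .imp f g => max (qDepth f) (qDepth g)
  | _, .all f => qDepth f + 1

/-- `Th_k` of a simple graph: the set of sentences of the language `L` of graphs of
quantifier depth at most `k` satisfied by the graph. -/
def Thk (k : ℕ) {V : Type} (G : SimpleGraph V) : Set Language.graph.Sentence :=
  {ψ | qDepth ψ ≤ k ∧ @Language.Sentence.Realize _ _ G.structure ψ}

/-!
Write `A ≈[k] B` when Duplicator wins the `k`-round Ehrenfeucht–Fraïssé game on `A` and `B`. This
relation forces `Th_k A = Th_k B`, is a congruence for disjoint union, and has finitely many
classes, because equal rank-`k` types yield a winning strategy. Moreover `k + 1` copies of any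
graph `A` absorb `A`: in the game on `m` and `m'` copies of `A` with `m, m' ≥ k`, Duplicator
answers inside the copy matching the one Spoiler played in, and when Spoiler opens a new copy an
unused one is still available on the other side. So the disjoint union `G` of `k + 1` copies of a
representative of each class met in `𝒢` lies in `𝒢`, and `G ⊕ H ≈[k] G ⊕ A ≈[k] G` for `H ∈ 𝒢`
with representative `A`.
-/

open Language Set

theorem _root_.Option.elim'_comp_map {ι ι' V : Type} (f : ι' → ι) (xs : ι → V) (v : V) :
    Option.elim' v xs ∘ Option.map f = Option.elim' v (xs ∘ f) := by
  funext o; cases o <;> rfl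

theorem _root_.Option.comp_elim' {ι V W : Type} (f : V → W) (xs : ι → V) (v : V) :
    f ∘ Option.elim' v xs = Option.elim' (f v) (f ∘ xs) := by
  funext o; cases o <;> rfl

theorem _root_.Option.elim'_comp_finSuccEquivLast {n : ℕ} {V : Type} (xs : Fin n → V) (v : V) :
    Option.elim' v xs ∘ finSuccEquivLast = Fin.snoc xs v := by
  funext i
  induction i using Fin.lastCases <;> simp

theorem _root_.Option.range_elim' {ι V : Type} (xs : ι → V) (v : V) :
    range (Option.elim' v xs) = insert v (range xs) := by
  ext; simp [Option.exists, eq_comm]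

theorem _root_.Option.elim'_inl_sumMap {ι₁ ι₂ V W : Type} (xs₁ : ι₁ → V) (xs₂ : ι₂ → W) (v : V) :
    Option.elim' (Sum.inl v) (Sum.map xs₁ xs₂) =
      Sum.map (Option.elim' v xs₁) xs₂ ∘ Option.elim' (Sum.inl none) (Sum.map some id) := by
  funext o; rcases o with _ | _ | _ <;> rfl

theorem _root_.Option.elim'_inr_sumMap {ι₁ ι₂ V W : Type} (xs₁ : ι₁ → V) (xs₂ : ι₂ → W) (w : W) :
    Option.elim' (Sum.inr w) (Sum.map xs₁ xs₂) =
      Sum.map xs₁ (Option.elim' w xs₂) ∘ Option.elim' (Sum.inr none) (Sum.map id some) := by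
  funext o; rcases o with _ | _ | _ <;> rfl

/-- Duplicator wins the `k`-round Ehrenfeucht–Fraïssé game on `G` and `H` from the position in
which the pebbles `xs i` and `ys i` are already placed; a new pair of pebbles gets index `none`. -/
def EFEquiv {V W : Type} (G : SimpleGraph V) (H : SimpleGraph W) :
    ℕ → {ι : Type} → (ι → V) → (ι → W) → Prop
  | 0, _, xs, ys =>
      (∀ i j, xs i = xs j ↔ ys i = ys j) ∧ (∀ i j, G.Adj (xs i) (xs j) ↔ H.Adj (ys i) (ys j))
  | k + 1, _, xs, ys =>
      (∀ v, ∃ w, EFEquiv G H k (Option.elim' v xs) (Option.elim' w ys)) ∧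
      (∀ w, ∃ v, EFEquiv G H k (Option.elim' v xs) (Option.elim' w ys))

namespace EFEquiv

variable {V V' W W' X : Type} {G : SimpleGraph V} {G' : SimpleGraph V'} {H : SimpleGraph W}
  {H' : SimpleGraph W'} {I : SimpleGraph X}

theorem comp : ∀ {k : ℕ} {ι ι' : Type} {xs : ι → V} {ys : ι → W} (f : ι' → ι),
    EFEquiv G H k xs ys → EFEquiv G H k (xs ∘ f) (ys ∘ f)
  | 0, _, _, _, _, f, h => ⟨fun i j => h.1 (f i) (f j), fun i j => h.2 (f i) (f j)⟩
  | k + 1, _, _, xs, ys, f, h =>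
    ⟨fun v => (h.1 v).imp fun _ hw => by
      simpa only [Option.elim'_comp_map] using hw.comp (Option.map f),
     fun w => (h.2 w).imp fun _ hv => by
      simpa only [Option.elim'_comp_map] using hv.comp (Option.map f)⟩

theorem refl : ∀ (k : ℕ) {ι : Type} (xs : ι → V), EFEquiv G G k xs xs
  | 0, _, _ => ⟨fun _ _ => Iff.rfl, fun _ _ => Iff.rfl⟩
  | k + 1, _, _ => ⟨fun v => ⟨v, refl k _⟩, fun v => ⟨v, refl k _⟩⟩

theorem symm : ∀ {k : ℕ} {ι : Type} {xs : ι → V} {ys : ι → W},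
    EFEquiv G H k xs ys → EFEquiv H G k ys xs
  | 0, _, _, _, h => ⟨fun i j => (h.1 i j).symm, fun i j => (h.2 i j).symm⟩
  | _ + 1, _, _, _, h => ⟨fun w => (h.2 w).imp fun _ => symm, fun v => (h.1 v).imp fun _ => symm⟩

theorem trans : ∀ {k : ℕ} {ι : Type} {xs : ι → V} {ys : ι → W} {zs : ι → X},
    EFEquiv G H k xs ys → EFEquiv H I k ys zs → EFEquiv G I k xs zs
  | 0, _, _, _, _, h₁, h₂ =>
    ⟨fun i j => (h₁.1 i j).trans (h₂.1 i j), fun i j => (h₁.2 i j).trans (h₂.2 i j)⟩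
  | _ + 1, _, _, _, _, h₁, h₂ =>
    ⟨fun v => let ⟨w, hw⟩ := h₁.1 v; let ⟨x, hx⟩ := h₂.1 w; ⟨x, hw.trans hx⟩,
     fun x => let ⟨w, hw⟩ := h₂.2 x; let ⟨v, hv⟩ := h₁.2 w; ⟨v, hv.trans hw⟩⟩

theorem of_succ : ∀ {k : ℕ} {ι : Type} {xs : ι → V} {ys : ι → W},
    EFEquiv G H (k + 1) xs ys → EFEquiv G H k xs ys
  | 0, ι, xs, _, h => by
    cases isEmpty_or_nonempty ι with
    | inl _ => exact ⟨isEmptyElim, isEmptyElim⟩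
    | inr hι =>
      obtain ⟨w, hw⟩ := h.1 (xs hι.some)
      exact hw.comp some
  | _ + 1, _, _, _, h =>
    ⟨fun v => (h.1 v).imp fun _ => of_succ, fun w => (h.2 w).imp fun _ => of_succ⟩

theorem of_le {j k : ℕ} (hjk : j ≤ k) {ι : Type} {xs : ι → V} {ys : ι → W}
    (h : EFEquiv G H k xs ys) : EFEquiv G H j xs ys := by
  induction hjk with
  | refl => exact h
  | step _ ih => exact ih h.of_succ

theorem of_isEmpty {k : ℕ} {ι ι' : Type} [IsEmpty ι] [IsEmpty ι'] {xs : ι → V} {ys : ι → W}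
    (h : EFEquiv G H k xs ys) (xs' : ι' → V) (ys' : ι' → W) : EFEquiv G H k xs' ys' := by
  simpa only [Subsingleton.elim _ xs', Subsingleton.elim _ ys'] using h.comp (isEmptyElim : ι' → ι)

theorem snoc_iff {k n : ℕ} {xs : Fin n → V} {ys : Fin n → W} {v : V} {w : W} :
    EFEquiv G H k (Fin.snoc xs v) (Fin.snoc ys w) ↔
      EFEquiv G H k (Option.elim' v xs) (Option.elim' w ys) := by
  rw [← Option.elim'_comp_finSuccEquivLast, ← Option.elim'_comp_finSuccEquivLast]
  refine ⟨fun h => ?_, fun h => h.comp _⟩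
  simpa [Function.comp_assoc] using h.comp finSuccEquivLast.symm

theorem of_iso (e : G ≃g H) : ∀ (k : ℕ) {ι : Type} (xs : ι → V), EFEquiv G H k xs (e ∘ xs)
  | 0, _, xs => ⟨fun i j => e.injective.eq_iff.symm, fun i j => e.map_adj_iff.symm⟩
  | k + 1, _, xs =>
    ⟨fun v => ⟨e v, by simpa only [Option.comp_elim'] using of_iso e k (Option.elim' v xs)⟩,
     fun w => ⟨e.symm w, by
      simpa only [Option.comp_elim', RelIso.apply_symm_apply]
        using of_iso e k (Option.elim' (e.symm w) xs)⟩⟩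

theorem sum_forth {k : ℕ}
    (ih : ∀ {ι₁ ι₂ : Type} {xs₁ : ι₁ → V} {ys₁ : ι₁ → V'} {xs₂ : ι₂ → W} {ys₂ : ι₂ → W'},
      EFEquiv G G' k xs₁ ys₁ → EFEquiv H H' k xs₂ ys₂ →
        EFEquiv (G ⊕g H) (G' ⊕g H') k (Sum.map xs₁ xs₂) (Sum.map ys₁ ys₂))
    {ι₁ ι₂ : Type} {xs₁ : ι₁ → V} {ys₁ : ι₁ → V'} {xs₂ : ι₂ → W} {ys₂ : ι₂ → W'}
    (h₁ : EFEquiv G G' (k + 1) xs₁ ys₁) (h₂ : EFEquiv H H' (k + 1) xs₂ ys₂) :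
    ∀ z, ∃ z', EFEquiv (G ⊕g H) (G' ⊕g H') k
      (Option.elim' z (Sum.map xs₁ xs₂)) (Option.elim' z' (Sum.map ys₁ ys₂))
  | .inl v => by
    obtain ⟨v', hv⟩ := h₁.1 v
    refine ⟨.inl v', ?_⟩
    rw [Option.elim'_inl_sumMap xs₁, Option.elim'_inl_sumMap ys₁]
    exact (ih hv h₂.of_succ).comp _
  | .inr w => by
    obtain ⟨w', hw⟩ := h₂.1 w
    refine ⟨.inr w', ?_⟩
    rw [Option.elim'_inr_sumMap xs₁, Option.elim'_inr_sumMap ys₁]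
    exact (ih h₁.of_succ hw).comp _

theorem sum {k : ℕ} {ι₁ ι₂ : Type} {xs₁ : ι₁ → V} {ys₁ : ι₁ → V'} {xs₂ : ι₂ → W}
    {ys₂ : ι₂ → W'} (h₁ : EFEquiv G G' k xs₁ ys₁) (h₂ : EFEquiv H H' k xs₂ ys₂) :
    EFEquiv (G ⊕g H) (G' ⊕g H') k (Sum.map xs₁ xs₂) (Sum.map ys₁ ys₂) := by
  induction k generalizing V V' W W' ι₁ ι₂ with
  | zero =>
    constructor
    · rintro (i | i) (j | j) <;> simp [h₁.1, h₂.1]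
    · rintro (i | i) (j | j) <;> simp [h₁.2, h₂.2]
  | succ k ih =>
    exact ⟨sum_forth ih h₁ h₂, fun z => (sum_forth ih h₁.symm h₂.symm z).imp fun _ => symm⟩

end EFEquiv

theorem graph_term_eq_var {α : Type} (t : Language.graph.Term (Empty ⊕ α)) :
    ∃ i, t = Term.var (Sum.inr i) := by
  rcases t with (e | i) | ⟨f, _⟩
  · exact e.elim
  · exact ⟨i, rfl⟩
  · exact f.elim

namespace EFEquiv

variable {V W : Type} {G : SimpleGraph V} {H : SimpleGraph W}

theorem realize_iff {n : ℕ} (φ : Language.graph.BoundedFormula Empty n) :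
    ∀ {k : ℕ}, qDepth φ ≤ k → ∀ {xs : Fin n → V} {ys : Fin n → W}, EFEquiv G H k xs ys →
      (@BoundedFormula.Realize _ _ G.structure _ _ φ default xs ↔
        @BoundedFormula.Realize _ _ H.structure _ _ φ default ys) := by
  induction φ with
  | falsum => intros; exact Iff.rfl
  | equal t₁ t₂ =>
    intro k _ xs ys h
    obtain ⟨i, rfl⟩ := graph_term_eq_var t₁
    obtain ⟨j, rfl⟩ := graph_term_eq_var t₂
    exact (h.of_le k.zero_le).1 i j
  | rel R ts =>
    intro k _ xs ys h
    cases R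
    obtain ⟨i, hi⟩ := graph_term_eq_var (ts 0)
    obtain ⟨j, hj⟩ := graph_term_eq_var (ts 1)
    show G.Adj _ _ ↔ H.Adj _ _
    simp only [hi, hj]
    exact (h.of_le k.zero_le).2 i j
  | imp φ ψ ihφ ihψ =>
    intro k hk xs ys h
    exact imp_congr (ihφ (le_of_max_le_left hk) h) (ihψ (le_of_max_le_right hk) h)
  | all φ ih =>
    intro k hk xs ys h
    have hk : qDepth φ + 1 ≤ k := hk
    obtain ⟨k, rfl⟩ : ∃ j, k = j + 1 := ⟨k - 1, by omega⟩
    have hφ : qDepth φ ≤ k := by omega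
    simp only [BoundedFormula.realize_all]
    constructor
    · intro hG w
      obtain ⟨v, hv⟩ := h.2 w
      exact (ih hφ (snoc_iff.mpr hv)).mp (hG v)
    · intro hH v
      obtain ⟨w, hw⟩ := h.1 v
      exact (ih hφ (snoc_iff.mpr hw)).mpr (hH w)

theorem thk_eq {k : ℕ} (h : EFEquiv G H k (default : Fin 0 → V) default) : Thk k G = Thk k H :=
  Set.ext fun ψ => and_congr_right fun hψ => realize_iff ψ hψ h

end EFEquiv

/-- Codes for the rank-`k` (Hintikka) types of `n`-tuples of vertices. -/
def RankType : ℕ → ℕ → Type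
  | 0, n => (Fin n → Fin n → Prop) × (Fin n → Fin n → Prop)
  | k + 1, n => Set (RankType k (n + 1))

instance RankType.finite : ∀ k n, Finite (RankType k n)
  | 0, _ => inferInstanceAs (Finite (_ × _))
  | k + 1, n => have := RankType.finite k (n + 1); inferInstanceAs (Finite (Set _))

section RankType

variable {V W : Type}

def rankType (G : SimpleGraph V) : ∀ (k : ℕ) {n : ℕ}, (Fin n → V) → RankType k n
  | 0, _, xs => (fun i j => xs i = xs j, fun i j => G.Adj (xs i) (xs j))
  | k + 1, _, xs => range fun v => rankType G k (Fin.snoc xs v)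

theorem efEquiv_of_rankType_eq {G : SimpleGraph V} {H : SimpleGraph W} :
    ∀ (k : ℕ) {n : ℕ} {xs : Fin n → V} {ys : Fin n → W},
      rankType G k xs = rankType H k ys → EFEquiv G H k xs ys
  | 0, _, _, _, h => by
    obtain ⟨h₁, h₂⟩ := Prod.mk.inj h
    exact ⟨fun i j => (congrFun₂ h₁ i j).to_iff, fun i j => (congrFun₂ h₂ i j).to_iff⟩
  | k + 1, _, xs, ys, h => by
    have hrange : (range fun v => rankType G k (Fin.snoc xs v)) =
        range fun w => rankType H k (Fin.snoc ys w) := h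
    constructor
    · intro v
      obtain ⟨w, hw⟩ : rankType G k (Fin.snoc xs v) ∈ _ := hrange ▸ mem_range_self v
      exact ⟨w, EFEquiv.snoc_iff.mp (efEquiv_of_rankType_eq k hw.symm)⟩
    · intro w
      obtain ⟨v, hv⟩ : rankType H k (Fin.snoc ys w) ∈ _ := hrange.symm ▸ mem_range_self w
      exact ⟨v, EFEquiv.snoc_iff.mp (efEquiv_of_rankType_eq k hv)⟩

end RankType

section Copies

variable {V : Type}

def copies (m : ℕ) (G : SimpleGraph V) : SimpleGraph (Fin m × V) where
  Adj a b := a.1 = b.1 ∧ G.Adj a.2 b.2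
  symm := ⟨fun _ _ h => ⟨h.1.symm, h.2.symm⟩⟩
  loopless := ⟨fun _ h => h.2.ne rfl⟩

@[simp]
theorem copies_adj {m : ℕ} {G : SimpleGraph V} {a b : Fin m × V} :
    (copies m G).Adj a b ↔ a.1 = b.1 ∧ G.Adj a.2 b.2 :=
  Iff.rfl

variable (G : SimpleGraph V)

def isoCopiesOne : G ≃g copies 1 G where
  toFun v := (0, v)
  invFun p := p.2
  left_inv _ := rfl
  right_inv p := Prod.ext (Subsingleton.elim _ _) rfl
  map_rel_iff' := by simp

def sumIsoCopiesSucc (m : ℕ) : copies m G ⊕g G ≃g copies (m + 1) G where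
  toFun := Sum.elim (fun p => (p.1.castSucc, p.2)) fun v => (Fin.last m, v)
  invFun p :=
    Fin.lastCases (motive := fun _ => (Fin m × V) ⊕ V) (.inr p.2) (fun i => .inl (i, p.2)) p.1
  left_inv := by rintro (⟨i, x⟩ | x) <;> simp
  right_inv := by
    rintro ⟨i, x⟩
    induction i using Fin.lastCases <;> simp
  map_rel_iff' := by
    rintro (⟨i, x⟩ | x) (⟨j, y⟩ | y) <;>
      simp [Fin.castSucc_inj, (Fin.castSucc_lt_last _).ne, (Fin.castSucc_lt_last _).ne']

theorem exists_partner {ι α β : Type} {a : ι → α} {b : ι → β}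
    (hab : ∀ i i', a i = a i' ↔ b i = b i') (hb : ∃ y, y ∉ range b) (x : α) :
    ∃ y, ∀ i, a i = x ↔ b i = y := by
  by_cases hx : x ∈ range a
  · obtain ⟨i₀, rfl⟩ := hx
    exact ⟨b i₀, fun i => hab i i₀⟩
  · obtain ⟨y, hy⟩ := hb
    exact ⟨y, fun i => iff_of_false (fun h => hx ⟨i, h⟩) (fun h => hy ⟨i, h⟩)⟩

theorem copies_forth {j m m' : ℕ}
    (ih : ∀ {ι : Type} (zs : ι → Fin m × V) (zs' : ι → Fin m' × V),
      (∀ i, (zs i).2 = (zs' i).2) → (∀ i i', (zs i).1 = (zs i').1 ↔ (zs' i).1 = (zs' i').1) →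
      (range fun i => (zs i).1).ncard + j ≤ m → (range fun i => (zs' i).1).ncard + j ≤ m' →
      EFEquiv (copies m G) (copies m' G) j zs zs')
    {ι : Type} (zs : ι → Fin m × V) (zs' : ι → Fin m' × V) (hsnd : ∀ i, (zs i).2 = (zs' i).2)
    (hfst : ∀ i i', (zs i).1 = (zs i').1 ↔ (zs' i).1 = (zs' i').1)
    (hm : (range fun i => (zs i).1).ncard + (j + 1) ≤ m)
    (hm' : (range fun i => (zs' i).1).ncard + (j + 1) ≤ m') :
    ∀ z, ∃ z', EFEquiv (copies m G) (copies m' G) j (Option.elim' z zs) (Option.elim' z' zs') := by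
  rintro ⟨a, x⟩
  obtain ⟨b₀, -, hb₀⟩ := exists_mem_notMem_of_ncard_lt_ncard
    (s := range fun i => (zs' i).1) (t := univ) (by rw [ncard_univ, Nat.card_fin]; omega)
  obtain ⟨b, hb⟩ := exists_partner hfst ⟨b₀, hb₀⟩ a
  have hcard {m : ℕ} (zs : ι → Fin m × V) (z : Fin m × V) :
      (range fun o => (Option.elim' z zs o).1).ncard ≤ (range fun i => (zs i).1).ncard + 1 := by
    rw [range_comp' Prod.fst, Option.range_elim', image_insert_eq, ← range_comp']
    exact ncard_insert_le _ _
  refine ⟨(b, x), ih _ _ ?_ ?_ ?_ ?_⟩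
  · rintro (_ | i)
    exacts [rfl, hsnd i]
  · rintro (_ | i) (_ | i')
    · exact iff_of_true rfl rfl
    · exact eq_comm.trans ((hb i').trans eq_comm)
    · exact hb i
    · exact hfst i i'
  · linarith [hcard zs (a, x)]
  · linarith [hcard zs' (b, x)]

theorem efEquiv_copies : ∀ (j : ℕ) {m m' : ℕ} {ι : Type} (zs : ι → Fin m × V)
    (zs' : ι → Fin m' × V), (∀ i, (zs i).2 = (zs' i).2) →
    (∀ i i', (zs i).1 = (zs i').1 ↔ (zs' i).1 = (zs' i').1) →
    (range fun i => (zs i).1).ncard + j ≤ m → (range fun i => (zs' i).1).ncard + j ≤ m' →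
    EFEquiv (copies m G) (copies m' G) j zs zs'
  | 0, _, _, _, zs, zs', hsnd, hfst, _, _ =>
    ⟨fun i i' => by rw [Prod.ext_iff, Prod.ext_iff, hsnd, hsnd, hfst],
     fun i i' => by rw [copies_adj, copies_adj, hsnd, hsnd, hfst]⟩
  | j + 1, _, _, _, zs, zs', hsnd, hfst, hm, hm' =>
    ⟨copies_forth G (efEquiv_copies j) zs zs' hsnd hfst hm hm',
     fun z' => (copies_forth G (efEquiv_copies j) zs' zs (fun i => (hsnd i).symm)
      (fun i i' => (hfst i i').symm) hm' hm z').imp fun _ => EFEquiv.symm⟩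

end Copies

abbrev SigmaGraph := Σ V : Type, SimpleGraph V

namespace SigmaGraph

instance : Add SigmaGraph := ⟨fun A B => ⟨A.1 ⊕ B.1, A.2 ⊕g B.2⟩⟩

def KEquiv (k : ℕ) (A B : SigmaGraph) : Prop :=
  EFEquiv A.2 B.2 k (default : Fin 0 → A.1) default

notation:50 A " ≈[" k "] " B => KEquiv k A B

namespace KEquiv

variable {k : ℕ} {A A' B B' C : SigmaGraph}

theorem refl (A : SigmaGraph) : A ≈[k] A := EFEquiv.refl k _

theorem symm (h : A ≈[k] B) : B ≈[k] A := EFEquiv.symm h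

theorem trans (h₁ : A ≈[k] B) (h₂ : B ≈[k] C) : A ≈[k] C := EFEquiv.trans h₁ h₂

instance : Trans (KEquiv k) (KEquiv k) (KEquiv k) := ⟨trans⟩

theorem of_iso (e : A.2 ≃g B.2) : A ≈[k] B :=
  (EFEquiv.of_iso e k (default : Fin 0 → A.1)).of_isEmpty _ _

theorem add (hA : A ≈[k] A') (hB : B ≈[k] B') : A + B ≈[k] A' + B' :=
  (EFEquiv.sum (ι₁ := Fin 0) (ι₂ := Fin 0) hA hB).of_isEmpty _ _

theorem add_comm (A B : SigmaGraph) : A + B ≈[k] B + A := of_iso SimpleGraph.Iso.sumComm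

theorem add_assoc (A B C : SigmaGraph) : A + B + C ≈[k] A + (B + C) :=
  of_iso SimpleGraph.Iso.sumAssoc

theorem add_right_comm (A B C : SigmaGraph) : A + B + C ≈[k] A + C + B :=
  calc A + B + C ≈[k] A + (B + C) := add_assoc A B C
    _ ≈[k] A + (C + B) := add (refl A) (add_comm B C)
    _ ≈[k] A + C + B := (add_assoc A C B).symm

end KEquiv

open KEquiv

variable {k : ℕ}

/-- The disjoint union of `n + 1` copies of `A`. -/
def multiple (A : SigmaGraph) : ℕ → SigmaGraph
  | 0 => A
  | n + 1 => multiple A n + A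

theorem multiple_mem {𝒢 : Set SigmaGraph} (hclosed : ∀ A ∈ 𝒢, ∀ B ∈ 𝒢, A + B ∈ 𝒢)
    {A : SigmaGraph} (hA : A ∈ 𝒢) : ∀ n, multiple A n ∈ 𝒢
  | 0 => hA
  | n + 1 => hclosed _ (multiple_mem hclosed hA n) _ hA

theorem multiple_kEquiv_copies (A : SigmaGraph) :
    ∀ n, multiple A n ≈[k] ⟨Fin (n + 1) × A.1, copies (n + 1) A.2⟩
  | 0 => of_iso (isoCopiesOne A.2)
  | n + 1 => (add (multiple_kEquiv_copies A n) (refl A)).trans (of_iso (sumIsoCopiesSucc A.2 _))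

theorem copies_kEquiv_copies {V : Type} (G : SimpleGraph V) {m m' : ℕ} (hm : k ≤ m)
    (hm' : k ≤ m') : ⟨Fin m × V, copies m G⟩ ≈[k] ⟨Fin m' × V, copies m' G⟩ :=
  efEquiv_copies G k default default finZeroElim finZeroElim (by simpa using hm)
    (by simpa using hm')

theorem multiple_add_self (A : SigmaGraph) : multiple A k + A ≈[k] multiple A k :=
  (multiple_kEquiv_copies A (k + 1)).trans <|
    (copies_kEquiv_copies A.2 (by omega) (by omega)).trans (multiple_kEquiv_copies A k).symm

theorem exists_absorbing {𝒢 : Set SigmaGraph} (hne : 𝒢.Nonempty)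
    (hclosed : ∀ A ∈ 𝒢, ∀ B ∈ 𝒢, A + B ∈ 𝒢) (k : ℕ) {S : Set (RankType k 0)} (hS : S.Finite) :
    ∃ G ∈ 𝒢, ∀ H ∈ 𝒢, rankType H.2 k default ∈ S → G + H ≈[k] G := by
  induction S, hS using Set.Finite.induction_on with
  | empty =>
    obtain ⟨G, hG⟩ := hne
    exact ⟨G, hG, fun _ _ h => h.elim⟩
  | @insert t S _ _ ih =>
    obtain ⟨G, hG, habs⟩ := ih
    by_cases ht : ∃ A ∈ 𝒢, rankType A.2 k default = t
    · obtain ⟨A, hA, rfl⟩ := ht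
      refine ⟨G + multiple A k, hclosed _ hG _ (multiple_mem hclosed hA k), fun H hH hHt => ?_⟩
      rcases hHt with hHt | hHt
      · have hAH : A ≈[k] H := efEquiv_of_rankType_eq k hHt.symm
        calc G + multiple A k + H ≈[k] G + (multiple A k + H) := add_assoc _ _ _
          _ ≈[k] G + (multiple A k + A) := add (refl G) (add (refl _) hAH.symm)
          _ ≈[k] G + multiple A k := add (refl G) (multiple_add_self A)
      · calc G + multiple A k + H ≈[k] G + H + multiple A k := add_right_comm _ _ _
          _ ≈[k] G + multiple A k := add (habs H hH hHt) (refl _)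
    · exact ⟨G, hG, fun H hH hHt => habs H hH (hHt.resolve_left fun h => ht ⟨H, hH, h⟩)⟩

end SigmaGraph

theorem statement_18_general (𝒢 : Set (Σ V : Type, SimpleGraph V))
    (hne : 𝒢.Nonempty)
    (hclosed : ∀ G ∈ 𝒢, ∀ H ∈ 𝒢, (⟨G.1 ⊕ H.1, G.2 ⊕g H.2⟩ : Σ V : Type, SimpleGraph V) ∈ 𝒢)
    (k : ℕ) :
    ∃ G ∈ 𝒢, ∀ H ∈ 𝒢, Thk k G.2 = Thk k (G.2 ⊕g H.2) := by
  obtain ⟨G, hG, habs⟩ := SigmaGraph.exists_absorbing hne hclosed k (toFinite univ)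
  exact ⟨G, hG, fun H hH => EFEquiv.thk_eq (habs H hH trivial).symm⟩

/-- Let `𝒢` be a (nonempty) family of finite graphs closed under disjoint
union `⊕g`, and let `k` be a natural number.  Then there is a graph `G ∈ 𝒢` such that for
every `H ∈ 𝒢` the graphs `G` and `G ⊕g H` satisfy exactly the same first-order sentences of
the language `L` of quantifier depth at most `k`. -/
theorem statement_18 (𝒢 : Set (Σ V : Type, SimpleGraph V))
    (hne : 𝒢.Nonempty)
    (hfin : ∀ G ∈ 𝒢, Finite G.1)
    (hclosed : ∀ G ∈ 𝒢, ∀ H ∈ 𝒢, (⟨G.1 ⊕ H.1, G.2 ⊕g H.2⟩ : Σ V : Type, SimpleGraph V) ∈ 𝒢)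
    (k : ℕ) :
    ∃ G ∈ 𝒢, ∀ H ∈ 𝒢, Thk k G.2 = Thk k (G.2 ⊕g H.2) :=
  statement_18_general 𝒢 hne hclosed k

end RandomGraph
end
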